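/- Let R be a commutative ring and let f₁, ..., fₙ ∈ R generate the unit ideal. Then the sequence 0 → R → ⊕ᵢ R[1/fᵢ] → ⊕ᵢⱼ R[1/fᵢfⱼ] is exact, where the first map sends r to its images in each localization, and the second sends (rᵢ) to the element whose (i,j) component is the image of rᵢ minus the image of rⱼ in R[1/fᵢfⱼ]. -/

import Mathlib

/-- The natural map `R[1/a] → R[1/(a*b)]`. -/
noncomputable def awayToLeft (R : Type u) [CommRing R] (a b : R) :
    Localization.Away a →+* Localization.Away (a * b) :=
  Localization.awayLift (algebraMap R (Localization.Away (a * b))) a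
    (isUnit_of_mul_isUnit_left (y := algebraMap R (Localization.Away (a * b)) b)
      (by rw [← map_mul]
          exact IsLocalization.map_units _ ⟨a * b, Submonoid.mem_powers _⟩))

/-- The natural map `R[1/b] → R[1/(a*b)]`. -/
noncomputable def awayToRight (R : Type u) [CommRing R] (a b : R) :
    Localization.Away b →+* Localization.Away (a * b) :=
  Localization.awayLift (algebraMap R (Localization.Away (a * b))) b
    (isUnit_of_mul_isUnit_right (x := algebraMap R (Localization.Away (a * b)) a)
      (by rw [← map_mul]
          exact IsLocalization.map_units _ ⟨a * b, Submonoid.mem_powers _⟩))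

/-!
Both halves are Mathlib's sheaf condition for the cover of `Spec R` by the basic opens `D(a)`,
`a ∈ range f`. The only work is passing from the indices to that set: two indices with
`f i = f j` are reconciled through `R[1/a] ≅ R[1/a²]`.
-/

universe u

section

variable {R : Type*} [CommRing R]

@[simp]
lemma awayToLeft_algebraMap (a b x : R) :
    awayToLeft R a b (algebraMap R _ x) = algebraMap R (Localization.Away (a * b)) x :=
  IsLocalization.lift_eq _ _

@[simp]
lemma awayToRight_algebraMap (a b x : R) :
    awayToRight R a b (algebraMap R _ x) = algebraMap R (Localization.Away (a * b)) x :=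
  IsLocalization.lift_eq _ _

/-- If `a` is already invertible in `R[1/b]`, then `R[1/b]` is itself a localization away from
`a * b`, so `awayToRight` is an isomorphism. -/
lemma awayToRight_injective {a b : R} (ha : IsUnit (algebraMap R (Localization.Away b) a)) :
    Function.Injective (awayToRight R a b) := by
  have := IsLocalization.Away.mul_of_isUnit' a b ha
  let e := IsLocalization.algEquiv (Submonoid.powers (a * b))
    (Localization.Away b) (Localization.Away (a * b))
  have he : awayToRight R a b = e.toRingHom :=
    IsLocalization.ringHom_ext (Submonoid.powers b) (by ext; simp)
  rw [he]
  exact e.injective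

lemma algebraMap_eq_cast_iff {a b : R} (e : a = b) (x : Localization.Away a) (r : R) :
    algebraMap R (Localization.Away b) r = e ▸ x ↔ algebraMap R (Localization.Away a) r = x := by
  subst e
  rfl

variable {ι : Type*} {f : ι → R} {s : ∀ i, Localization.Away (f i)}

lemma awayToAwayRight_cast_eq_awayToAwayLeft_cast
    (h : ∀ i j, awayToLeft R (f i) (f j) (s i) = awayToRight R (f i) (f j) (s j))
    {a b : R} {i j : ι} (ha : f i = a) (hb : f j = b) :
    IsLocalization.Away.awayToAwayRight (P := Localization.Away (a * b)) a b (ha ▸ s i) =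
      IsLocalization.Away.awayToAwayLeft b a (hb ▸ s j) := by
  subst ha hb
  exact h i j

lemma algebraMap_eq_of_compatible_of_eq
    (h : ∀ i j, awayToLeft R (f i) (f j) (s i) = awayToRight R (f i) (f j) (s j))
    {i j : ι} (e : f i = f j) {r : R} (hr : algebraMap R _ r = s i) :
    algebraMap R _ r = s j := by
  have ha : IsUnit (algebraMap R (Localization.Away (f j)) (f i)) := by
    rw [e]
    exact IsLocalization.Away.algebraMap_isUnit (f j)
  apply awayToRight_injective ha
  rw [awayToRight_algebraMap, ← h i j, ← hr, awayToLeft_algebraMap]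

lemma exists_algebraMap_eq_of_compatible (hf : Ideal.span (Set.range f) = ⊤)
    (h : ∀ i j, awayToLeft R (f i) (f j) (s i) = awayToRight R (f i) (f j) (s j)) :
    ∃ r : R, ∀ i, algebraMap R _ r = s i := by
  -- The library's sheaf condition is indexed by the set `range f`: over each of its points we pick
  -- an index `idx a` and transport `s (idx a)` along `f (idx a) = a`.
  choose idx hidx using fun a : Set.range f => a.2
  obtain ⟨r, hr, -⟩ := Localization.existsUnique_algebraMap_eq_of_span_eq_top _ hf
    (fun a => hidx a ▸ s (idx a))
    (fun a b => awayToAwayRight_cast_eq_awayToAwayLeft_cast h (hidx a) (hidx b))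
  refine ⟨r, fun i => algebraMap_eq_of_compatible_of_eq h (hidx ⟨f i, i, rfl⟩) ?_⟩
  exact (algebraMap_eq_cast_iff _ _ r).mp (hr ⟨f i, i, rfl⟩)

end

/-- Stacks project Tag 00EJ: if `f 0, …, f (n-1)` generate the unit ideal of `R`, then
`0 → R → ⊕ᵢ R[1/fᵢ] → ⊕ᵢⱼ R[1/fᵢfⱼ]` is exact: the map `R → ⊕ᵢ R[1/fᵢ]` is injective,
and a family `(sᵢ)` has matching images in every `R[1/fᵢfⱼ]` iff it comes from some
`r : R`. -/
theorem tag00EJ (R : Type u) [CommRing R] (n : ℕ) (f : Fin n → R)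
    (hf : Ideal.span (Set.range f) = ⊤) :
    Function.Injective (fun (r : R) (i : Fin n) => algebraMap R (Localization.Away (f i)) r) ∧
    ∀ s : ∀ i : Fin n, Localization.Away (f i),
      ((∀ i j, awayToLeft R (f i) (f j) (s i) = awayToRight R (f i) (f j) (s j)) ↔
        ∃ r : R, ∀ i, algebraMap R (Localization.Away (f i)) r = s i) := by
  refine ⟨fun r r' hrr' => Localization.algebraMap_injective_of_span_eq_top _ hf ?_,
    fun s => ⟨exists_algebraMap_eq_of_compatible hf, ?_⟩⟩
  · funext ⟨_, i, rfl⟩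
    exact congrFun hrr' i
  · rintro ⟨r, hr⟩ i j
    rw [← hr i, ← hr j, awayToLeft_algebraMap, awayToRight_algebraMap]
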